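/- Let z ∈ PL₊(J) with z(t) < t for all interior t of the compact interval J = [η,ζ]. Then the map sending each element g of the centralizer of z in PL₊(J) to its initial slope g'(η⁺) ∈ ℝ₊ is an injective group homomorphism into the multiplicative group of positive reals. -/

import Mathlib

/-- An orientation-preserving piecewise-linear homeomorphism of the compact interval
[η, ζ] with finitely many breakpoints (an element of PL₊([η,ζ])). -/
def PLHomeoOn (η ζ : ℝ) (f : ℝ → ℝ) : Prop :=
  f η = η ∧ f ζ = ζ ∧ StrictMonoOn f (Set.Icc η ζ) ∧
  ∃ (n : ℕ) (x : Fin (n + 1) → ℝ), StrictMono x ∧ x 0 = η ∧ x (Fin.last n) = ζ ∧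
    ∀ i : Fin n, ∃ a b : ℝ, 0 < a ∧
      ∀ t ∈ Set.Icc (x i.castSucc) (x i.succ), f t = a * t + b

open Set Filter Topology

/-!
An element of PL₊(J) is affine near η, with slope its initial slope, so two elements of the
centralizer of z with the same initial slope agree near η. Under iteration z pushes every
interior point towards η, and `g (z^[n] t) = z^[n] (g t)` transports the agreement near η to
all of J because z is injective. Multiplicativity is the chain rule at the common fixed point η.
-/

theorem Icc_subset_iUnion_Icc_castSucc_succ {α : Type*} [LinearOrder α] {n : ℕ}
    {x : Fin (n + 2) → α} (hx : Monotone x) :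
    Icc (x 0) (x (Fin.last (n + 1))) ⊆ ⋃ i : Fin (n + 1), Icc (x i.castSucc) (x i.succ) := by
  induction n with
  | zero => intro p hp; exact mem_iUnion.2 ⟨0, hp⟩
  | succ n ih =>
    intro p ⟨hp₀, hp⟩
    rcases le_or_gt p (x (Fin.last (n + 1)).castSucc) with hle | hlt
    · obtain ⟨i, hi⟩ := mem_iUnion.1 <|
        ih (x := x ∘ Fin.castSucc) (hx.comp Fin.strictMono_castSucc.monotone) ⟨hp₀, hle⟩
      refine mem_iUnion.2 ⟨i.castSucc, ?_⟩
      rwa [Function.comp_apply, Function.comp_apply, ← Fin.succ_castSucc] at hi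
    · exact mem_iUnion.2 ⟨Fin.last _, hlt.le, hp⟩

theorem apply_iterate_eq_iterate_apply {α : Type*} {s : Set α} {z g : α → α}
    (hz : MapsTo z s s) (hc : ∀ t ∈ s, g (z t) = z (g t)) (n : ℕ) {t : α} (ht : t ∈ s) :
    g (z^[n] t) = z^[n] (g t) := by
  induction n with
  | zero => rfl
  | succ n ih =>
    rw [Function.iterate_succ_apply', Function.iterate_succ_apply', hc _ (hz.iterate n ht), ih]

theorem eq_of_apply_iterate_eq {α : Type*} {s : Set α} {z g₁ g₂ : α → α}
    (hz : InjOn z s) (hzs : MapsTo z s s) (hg₁ : MapsTo g₁ s s) (hg₂ : MapsTo g₂ s s)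
    (hc₁ : ∀ t ∈ s, g₁ (z t) = z (g₁ t)) (hc₂ : ∀ t ∈ s, g₂ (z t) = z (g₂ t))
    {t : α} (ht : t ∈ s) {n : ℕ} (h : g₁ (z^[n] t) = g₂ (z^[n] t)) : g₁ t = g₂ t :=
  hz.iterate hzs n (hg₁ ht) (hg₂ ht) <| by
    rw [← apply_iterate_eq_iterate_apply hzs hc₁ n ht,
      ← apply_iterate_eq_iterate_apply hzs hc₂ n ht, h]

theorem tendsto_iterate_nhdsGE_of_lt_self {α : Type*} [ConditionallyCompleteLinearOrder α]
    [TopologicalSpace α] [OrderTopology α] {a b : α} {f : α → α}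
    (hcont : ContinuousOn f (Icc a b)) (hmaps : MapsTo f (Icc a b) (Icc a b)) (hfa : f a = a)
    (hlt : ∀ t ∈ Ioo a b, f t < t) {t : α} (ht : t ∈ Ico a b) :
    Tendsto (fun n => f^[n] t) atTop (𝓝[≥] a) := by
  have hle : ∀ s ∈ Ico a b, f s ≤ s := fun s hs =>
    hs.1.eq_or_lt.elim (fun h => h ▸ hfa.le) fun h => (hlt s ⟨h, hs.2⟩).le
  have hIco : MapsTo f (Ico a b) (Ico a b) := fun s hs =>
    ⟨(hmaps (Ico_subset_Icc_self hs)).1, (hle s hs).trans_lt hs.2⟩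
  set u : ℕ → α := fun n => f^[n] t
  have hu : ∀ n, u n ∈ Ico a b := fun n => hIco.iterate n ht
  have hu_succ : ∀ n, u (n + 1) = f (u n) := fun n => Function.iterate_succ_apply' f n t
  have hanti : Antitone u := antitone_nat_of_succ_le fun n => hu_succ n ▸ hle _ (hu n)
  have hbdd : BddBelow (range u) := ⟨a, forall_mem_range.2 fun n => (hu n).1⟩
  have hL := tendsto_atTop_ciInf hanti hbdd
  set L := ⨅ n, u n
  have hLmem : L ∈ Ico a b := ⟨le_ciInf fun n => (hu n).1, (ciInf_le hbdd 0).trans_lt ht.2⟩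
  have hfix : f L = L := by
    have hfu : Tendsto (f ∘ u) atTop (𝓝 (f L)) :=
      (hcont L (Ico_subset_Icc_self hLmem)).tendsto.comp <| tendsto_nhdsWithin_iff.2
        ⟨hL, Eventually.of_forall fun n => Ico_subset_Icc_self (hu n)⟩
    refine tendsto_nhds_unique hfu ?_
    simpa only [Function.comp_def, ← hu_succ] using (tendsto_add_atTop_iff_nat 1).2 hL
  have hLa : L = a :=
    hLmem.1.eq_or_lt.elim Eq.symm fun h => absurd hfix (hlt L ⟨h, hLmem.2⟩).ne
  exact tendsto_nhdsWithin_iff.2 ⟨hLa ▸ hL, Eventually.of_forall fun n => (hu n).1⟩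

namespace PLHomeoOn

variable {η ζ : ℝ} {f : ℝ → ℝ}

theorem mapsTo (hf : PLHomeoOn η ζ f) : MapsTo f (Icc η ζ) (Icc η ζ) := by
  obtain ⟨hη, hζ, hmono, -⟩ := hf
  intro t ht
  have hηζ : η ≤ ζ := ht.1.trans ht.2
  exact ⟨hη ▸ hmono.monotoneOn ⟨le_rfl, hηζ⟩ ht ht.1,
    hζ ▸ hmono.monotoneOn ht ⟨hηζ, le_rfl⟩ ht.2⟩

theorem continuousOn (hf : PLHomeoOn η ζ f) : ContinuousOn f (Icc η ζ) := by
  obtain ⟨-, -, -, n, x, hx, rfl, rfl, hpiece⟩ := hf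
  match n, x, hx, hpiece with
  | 0, x, _, _ => exact (subsingleton_Icc_of_ge le_rfl).continuousOn f
  | n + 1, x, hx, hpiece =>
    refine ContinuousOn.mono ?_ (Icc_subset_iUnion_Icc_castSucc_succ hx.monotone)
    refine (locallyFinite_of_finite _).continuousOn_iUnion (fun _ => isClosed_Icc) fun i => ?_
    obtain ⟨a, b, -, hab⟩ := hpiece i
    exact (continuousOn_id.const_smul a |>.add continuousOn_const).congr hab

theorem exists_pos_eventually_eq_affine (hηζ : η < ζ) (hf : PLHomeoOn η ζ f) :
    ∃ a, 0 < a ∧ ∀ᶠ t in 𝓝[≥] η, f t = η + a * (t - η) := by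
  obtain ⟨hη, -, -, n, x, hx, hx₀, hx_last, hpiece⟩ := hf
  match n, x, hx, hx₀, hx_last, hpiece with
  | 0, _, _, hx₀, hx_last, _ => exact absurd (hx₀.symm.trans hx_last) hηζ.ne
  | n + 1, x, hx, hx₀, _, hpiece =>
    obtain ⟨a, b, ha, hab⟩ := hpiece 0
    have hδ : η < x 1 := hx₀ ▸ hx Fin.zero_lt_one
    have hb : b = η - a * η := by
      have := hab η ⟨hx₀.le, hδ.le⟩
      linarith
    refine ⟨a, ha, ?_⟩
    filter_upwards [Icc_mem_nhdsGE hδ] with t ht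
    rw [hab t (by simpa [hx₀] using ht), hb]
    ring

theorem pos_and_eventually_eq_affine_of_hasDerivWithinAt (hηζ : η < ζ) (hf : PLHomeoOn η ζ f)
    {d : ℝ} (hd : HasDerivWithinAt f d (Ici η) η) :
    0 < d ∧ ∀ᶠ t in 𝓝[≥] η, f t = η + d * (t - η) := by
  obtain ⟨a, ha, hfa⟩ := hf.exists_pos_eventually_eq_affine hηζ
  have haffine : HasDerivWithinAt (fun t => η + a * (t - η)) a (Ici η) η := by
    simpa using ((hasDerivWithinAt_id η _).sub_const η |>.const_mul a).const_add η
  have hda : d = a :=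
    (uniqueDiffOn_Ici η η self_mem_Ici).eq_deriv _ hd
      (haffine.congr_of_eventuallyEq hfa (by rw [hf.1]; ring))
  exact hda ▸ ⟨ha, hfa⟩

theorem hasDerivWithinAt_comp (hηζ : η < ζ) (hf : PLHomeoOn η ζ f) {g : ℝ → ℝ} {d e : ℝ}
    (hg' : HasDerivWithinAt g d (Ici η) η) (hf' : HasDerivWithinAt f e (Ici η) η) :
    HasDerivWithinAt (g ∘ f) (d * e) (Ici η) η := by
  have hgf : HasDerivWithinAt g d (Ici η) (f η) := by rwa [hf.1]
  exact (hgf.comp η (hf'.mono Icc_subset_Ici_self) fun t ht => (hf.mapsTo ht).1)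
    |>.mono_of_mem_nhdsWithin (Icc_mem_nhdsGE hηζ)

end PLHomeoOn

/-- For z ∈ PL₊(J) strictly below the diagonal on the interior, the initial-slope map
g ↦ g'(η⁺) on the centralizer of z is an injective group homomorphism into ℝ₊. -/
theorem stmt13 (η ζ : ℝ) (hηζ : η < ζ) (z : ℝ → ℝ) (hz : PLHomeoOn η ζ z)
    (hbelow : ∀ t ∈ Set.Ioo η ζ, z t < t) :
    ∀ g₁ g₂ : ℝ → ℝ, ∀ d₁ d₂ : ℝ,
      PLHomeoOn η ζ g₁ → PLHomeoOn η ζ g₂ →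
      (∀ t ∈ Set.Icc η ζ, g₁ (z t) = z (g₁ t)) →
      (∀ t ∈ Set.Icc η ζ, g₂ (z t) = z (g₂ t)) →
      HasDerivWithinAt g₁ d₁ (Set.Ici η) η →
      HasDerivWithinAt g₂ d₂ (Set.Ici η) η →
      (0 < d₁ ∧
        (d₁ = d₂ → ∀ t ∈ Set.Icc η ζ, g₁ t = g₂ t) ∧
        HasDerivWithinAt (g₁ ∘ g₂) (d₁ * d₂) (Set.Ici η) η) := by
  intro g₁ g₂ d₁ d₂ hg₁ hg₂ hc₁ hc₂ hd₁ hd₂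
  obtain ⟨hd₁_pos, hg₁_affine⟩ := hg₁.pos_and_eventually_eq_affine_of_hasDerivWithinAt hηζ hd₁
  obtain ⟨-, hg₂_affine⟩ := hg₂.pos_and_eventually_eq_affine_of_hasDerivWithinAt hηζ hd₂
  refine ⟨hd₁_pos, fun hd t ht => ?_, hg₂.hasDerivWithinAt_comp hηζ hd₁ hd₂⟩
  rcases ht.2.eq_or_lt with rfl | htζ
  · rw [hg₁.2.1, hg₂.2.1]
  have horbit := tendsto_iterate_nhdsGE_of_lt_self hz.continuousOn hz.mapsTo hz.1 hbelow
    ⟨ht.1, htζ⟩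
  obtain ⟨n, hn₁, hn₂⟩ := (horbit.eventually (hg₁_affine.and hg₂_affine)).exists
  exact eq_of_apply_iterate_eq hz.2.2.1.injOn hz.mapsTo hg₁.mapsTo hg₂.mapsTo hc₁ hc₂ ht
    (by rw [hn₁, hn₂, hd])
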